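/- Let A be a set. Every lax extension Λ of the exponential functor H_A = (−)^A is induced by the set S(Λ) = { φ : A ⇸ A | 1_A (Λφ) 1_A }, i.e. Λ = Ĥ_A^{S(Λ)}; and every upwards-closed submonoid 𝒜 of the monoid of endorelations on A satisfies S(Ĥ_A^𝒜) = 𝒜. -/

import Mathlib

/-!
Since `H_A f` sends the identity `1_A ∈ A^A` to `f`, every relax extension `Λ` relates
`1_A (Λ f) f` and `f (Λ f°) 1_A`. Composing with these, a lax extension turns `f (Λ r) g`
into `1_A (Λ (g° · r · f)) 1_A`, and `1_A (Λ φ) 1_A` back into `f (Λ (g · φ · f°)) g`,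
which gives `f (Λ r) g` by monotonicity when `φ ≤ g° · r · f`. Hence `Λ r` is determined
by `S(Λ)`.
-/

open CategoryTheory Function

universe u

/-- Applicative composition of relations: `relComp s r = s · r`. -/
def relComp {X Y Z : Type u} (s : Y → Z → Prop) (r : X → Y → Prop) : X → Z → Prop :=
  fun x z => ∃ y, r x y ∧ s y z

/-- Converse of a relation. -/
def relConv {X Y : Type u} (r : X → Y → Prop) : Y → X → Prop := fun y x => r x y

/-- Graph relation of a function. -/
def fgraph {X Y : Type u} (f : X → Y) : X → Y → Prop := fun x y => f x = y

/-- An `F`-relator: a monotone assignment of relations `F X ⇸ F Y` to relations `X ⇸ Y`. -/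
structure Relator (F : Type u ⥤ Type u) : Type (u + 1) where
  map : ∀ {X Y : Type u}, (X → Y → Prop) → (F.obj X → F.obj Y → Prop)
  mono : ∀ {X Y : Type u} {r s : X → Y → Prop}, (∀ x y, r x y → s x y) →
    ∀ u v, map r u v → map s u v

/-- `f` is a coalgebra homomorphism from `(X, α)` to `(Y, β)`. -/
def IsCoalgHom (F : Type u ⥤ Type u) {X Y : Type u} (α : X → F.obj X) (β : Y → F.obj Y)
    (f : X → Y) : Prop :=
  ∀ x, β (f x) = F.map (TypeCat.ofHom f) (α x)

/-- Behavioural equivalence of states. -/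
def BehEq (F : Type u ⥤ Type u) {X Y : Type u} (α : X → F.obj X) (β : Y → F.obj Y)
    (x : X) (y : Y) : Prop :=
  ∃ (Z : Type u) (γ : Z → F.obj Z) (f : X → Z) (g : Y → Z),
    IsCoalgHom F α γ f ∧ IsCoalgHom F β γ g ∧ f x = g y

/-- `r` is a `Λ`-simulation from `(X, α)` to `(Y, β)`: `r ≤ β° · Λr · α`. -/
def IsSimulation {F : Type u ⥤ Type u} (Λ : Relator F) {X Y : Type u}
    (α : X → F.obj X) (β : Y → F.obj Y) (r : X → Y → Prop) : Prop :=
  ∀ x y, r x y → Λ.map r (α x) (β y)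

/-- `x` and `y` are `Λ`-similar: related by some `Λ`-simulation. -/
def LamSimilar {F : Type u ⥤ Type u} (Λ : Relator F) {X Y : Type u}
    (α : X → F.obj X) (β : Y → F.obj Y) (x : X) (y : Y) : Prop :=
  ∃ r, IsSimulation Λ α β r ∧ r x y

/-- `Λ` is a relax extension of `F`: `Ff ≤ Λf` and `(Ff)° ≤ Λ(f°)` for all functions `f`. -/
def IsRelaxExtension (F : Type u ⥤ Type u) (Λ : Relator F) : Prop :=
  ∀ {X Y : Type u} (f : X → Y),
    (∀ (u : F.obj X) (v : F.obj Y), F.map (TypeCat.ofHom f) u = v → Λ.map (fgraph f) u v) ∧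
    (∀ (v : F.obj Y) (u : F.obj X), F.map (TypeCat.ofHom f) u = v → Λ.map (relConv (fgraph f)) v u)

/-- `Λ` is a lax extension of `F`: a relax extension with `Λs · Λr ≤ Λ(s · r)`. -/
def IsLaxExtension (F : Type u ⥤ Type u) (Λ : Relator F) : Prop :=
  IsRelaxExtension F Λ ∧
    ∀ {X Y Z : Type u} (r : X → Y → Prop) (s : Y → Z → Prop)
      (u : F.obj X) (w : F.obj Z),
      relComp (Λ.map s) (Λ.map r) u w → Λ.map (relComp s r) u w

/-- The exponential functor `H_A = (−)^A`. -/
def expFunctor (A : Type u) : Type u ⥤ Type u where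
  obj X := A → X
  map f := TypeCat.ofHom (fun h => f ∘ h)
  map_id := by intros; rfl
  map_comp := by intros; rfl

/-- The relator `Ĥ_A^𝒜` induced by a set `𝒜` of endorelations on `A`:
`f (Ĥ_A^𝒜 r) g` iff `φ ≤ g° · r · f` for some `φ ∈ 𝒜`. -/
def hatRelator (A : Type u) (𝒜 : Set (A → A → Prop)) : Relator (expFunctor A) where
  map r f g := ∃ φ ∈ 𝒜, ∀ a b, φ a b → r (f a) (g b)
  mono h _ _ := fun ⟨φ, hφ, hp⟩ => ⟨φ, hφ, fun a b hab => h _ _ (hp a b hab)⟩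

/-- The set `S(Λ) = { φ : A ⇸ A | 1_A (Λφ) 1_A }` of endorelations induced by a
relator `Λ` of `H_A`. -/
def SLam (A : Type u) (Λ : Relator (expFunctor A)) : Set (A → A → Prop) :=
  {φ | Λ.map φ (id : A → A) (id : A → A)}

namespace IsRelaxExtension

variable {A X : Type u} {Λ : Relator (expFunctor A)}

theorem map_fgraph_id (hΛ : IsRelaxExtension (expFunctor A) Λ) (f : A → X) :
    Λ.map (fgraph f) id f :=
  (hΛ f).1 id f rfl

theorem map_relConv_fgraph_id (hΛ : IsRelaxExtension (expFunctor A) Λ) (f : A → X) :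
    Λ.map (relConv (fgraph f)) f id :=
  (hΛ f).2 f id rfl

end IsRelaxExtension

namespace IsLaxExtension

variable {A X Y : Type u} {Λ : Relator (expFunctor A)}

theorem relComp_mem_SLam (hΛ : IsLaxExtension (expFunctor A) Λ) {r : X → Y → Prop}
    {f : A → X} {g : A → Y} (hr : Λ.map r f g) :
    relComp (relConv (fgraph g)) (relComp r (fgraph f)) ∈ SLam A Λ := by
  obtain ⟨hrelax, hcomp⟩ := hΛ
  have hid_g : Λ.map (relComp r (fgraph f)) id g :=
    hcomp _ _ _ _ ⟨f, hrelax.map_fgraph_id f, hr⟩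
  exact hcomp _ _ _ _ ⟨g, hid_g, hrelax.map_relConv_fgraph_id g⟩

theorem map_of_mem_SLam (hΛ : IsLaxExtension (expFunctor A) Λ) {r : X → Y → Prop}
    {f : A → X} {g : A → Y} {φ : A → A → Prop} (hφ : φ ∈ SLam A Λ)
    (hφr : ∀ a b, φ a b → r (f a) (g b)) : Λ.map r f g := by
  obtain ⟨hrelax, hcomp⟩ := hΛ
  have hf_id : Λ.map (relComp φ (relConv (fgraph f))) f id :=
    hcomp _ _ _ _ ⟨id, hrelax.map_relConv_fgraph_id f, hφ⟩
  have hfg : Λ.map (relComp (fgraph g) (relComp φ (relConv (fgraph f)))) f g :=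
    hcomp _ _ _ _ ⟨id, hf_id, hrelax.map_fgraph_id g⟩
  refine Λ.mono ?_ f g hfg
  rintro _ _ ⟨b, ⟨a, rfl, hab⟩, rfl⟩
  exact hφr a b hab

theorem map_iff_hatRelator_SLam (hΛ : IsLaxExtension (expFunctor A) Λ) (r : X → Y → Prop)
    (f : A → X) (g : A → Y) :
    Λ.map r f g ↔ (hatRelator A (SLam A Λ)).map r f g := by
  refine ⟨fun hr => ⟨_, hΛ.relComp_mem_SLam hr, ?_⟩,
    fun ⟨_, hφ, hφr⟩ => hΛ.map_of_mem_SLam hφ hφr⟩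
  rintro a b ⟨_, ⟨_, rfl, hr⟩, rfl⟩
  exact hr

end IsLaxExtension

theorem SLam_hatRelator_of_upwardClosed {A : Type u} {𝒜 : Set (A → A → Prop)}
    (hup : ∀ φ ψ : A → A → Prop, φ ∈ 𝒜 → (∀ a b, φ a b → ψ a b) → ψ ∈ 𝒜) :
    SLam A (hatRelator A 𝒜) = 𝒜 := by
  ext φ
  exact ⟨fun ⟨ψ, hψ, hψφ⟩ => hup ψ φ hψ hψφ, fun hφ => ⟨φ, hφ, fun _ _ h => h⟩⟩

/-- Every lax extension `Λ` of `H_A = (−)^A` is induced by the set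
`S(Λ)`, i.e. `Λ = Ĥ_A^{S(Λ)}`; and every upwards-closed submonoid `𝒜` of the monoid
of endorelations on `A` satisfies `S(Ĥ_A^𝒜) = 𝒜`. -/
theorem stmt16 (A : Type u) :
    (∀ Λ : Relator (expFunctor A), IsLaxExtension (expFunctor A) Λ →
      ∀ (X Y : Type u) (r : X → Y → Prop)
        (f : (expFunctor A).obj X) (g : (expFunctor A).obj Y),
        Λ.map r f g ↔ (hatRelator A (SLam A Λ)).map r f g)
    ∧
    (∀ 𝒜 : Set (A → A → Prop), (@Eq A) ∈ 𝒜 →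
      (∀ φ ψ : A → A → Prop, φ ∈ 𝒜 → ψ ∈ 𝒜 → relComp ψ φ ∈ 𝒜) →
      (∀ φ ψ : A → A → Prop, φ ∈ 𝒜 → (∀ a b, φ a b → ψ a b) → ψ ∈ 𝒜) →
      SLam A (hatRelator A 𝒜) = 𝒜) :=
  ⟨fun _ hΛ _ _ r f g => hΛ.map_iff_hatRelator_SLam r f g,
    fun _ _ _ hup => SLam_hatRelator_of_upwardClosed hup⟩
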